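/- Suppose η : [ζ₀, ζ₀ + L] → ℝ is twice continuously differentiable with η'' + a·η = 0, η(ζ₀) = 1, η'(ζ₀) = 0, where a is continuous and a(ζ) ≥ (π/(2L))² for all ζ ∈ [ζ₀, ζ₀ + L]. Then η vanishes at some point of [ζ₀, ζ₀ + L]. -/

import Mathlib

/-!
Sturm comparison with `v(ζ) = cos (k (ζ - ζ₀))`, `k = π / (2L)`, which solves `v'' + k² v = 0`,
starts like `η` and first vanishes at `ζ₀ + L`. If `η` had no zero it would stay positive, and then
the Wronskian `η v' - η' v`, whose derivative is `(a - k²) η v ≥ 0`, would be nondecreasing.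
It is `0` at `ζ₀` but `-k η (ζ₀ + L) < 0` at `ζ₀ + L`.
-/

open Real Set

theorem IsPreconnected.pos_of_ne_zero {X : Type*} [TopologicalSpace X] {s : Set X}
    (hs : IsPreconnected s) {f : X → ℝ} (hf : ContinuousOn f s) {x₀ : X} (hx₀ : x₀ ∈ s)
    (hfx₀ : 0 < f x₀) (hne : ∀ x ∈ s, f x ≠ 0) : ∀ x ∈ s, 0 < f x := by
  intro x hx
  by_contra! hfx
  obtain ⟨y, hy, hfy⟩ := hs.intermediate_value hx hx₀ hf ⟨hfx, hfx₀.le⟩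
  exact hne y hy hfy

theorem monotoneOn_wronskian_of_le {s : Set ℝ} (hs : Convex ℝ s) {a b u u' v v' : ℝ → ℝ}
    (hu : ∀ x ∈ s, HasDerivWithinAt u (u' x) s x)
    (hu' : ∀ x ∈ s, HasDerivWithinAt u' (-(a x * u x)) s x)
    (hv : ∀ x ∈ s, HasDerivWithinAt v (v' x) s x)
    (hv' : ∀ x ∈ s, HasDerivWithinAt v' (-(b x * v x)) s x)
    (hba : ∀ x ∈ s, b x ≤ a x) (hu₀ : ∀ x ∈ s, 0 ≤ u x) (hv₀ : ∀ x ∈ s, 0 ≤ v x) :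
    MonotoneOn (fun x => u x * v' x - u' x * v x) s := by
  have hW : ∀ x ∈ s, HasDerivWithinAt (fun x => u x * v' x - u' x * v x)
      ((a x - b x) * u x * v x) s x := fun x hx =>
    (((hu x hx).mul (hv' x hx)).sub ((hu' x hx).mul (hv x hx))).congr_deriv (by ring)
  refine monotoneOn_of_hasDerivWithinAt_nonneg hs (fun x hx => (hW x hx).continuousWithinAt)
    (fun x hx => (hW x (interior_subset hx)).mono interior_subset) fun x hx => ?_
  have hx := interior_subset hx
  exact mul_nonneg (mul_nonneg (sub_nonneg.2 (hba x hx)) (hu₀ x hx)) (hv₀ x hx)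

theorem hasDerivAt_cos_mul_sub (k x₀ x : ℝ) :
    HasDerivAt (fun x => cos (k * (x - x₀))) (-(k * sin (k * (x - x₀)))) x := by
  simpa [mul_comm] using (((hasDerivAt_id x).sub_const x₀).const_mul k).cos

theorem hasDerivAt_neg_mul_sin_mul_sub (k x₀ x : ℝ) :
    HasDerivAt (fun x => -(k * sin (k * (x - x₀)))) (-(k ^ 2 * cos (k * (x - x₀)))) x := by
  simpa [pow_two, mul_assoc, mul_comm, mul_left_comm] using
    ((((hasDerivAt_id x).sub_const x₀).const_mul k).sin.const_mul k).fun_neg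

theorem cos_mul_sub_nonneg {k L x₀ x : ℝ} (hk : 0 ≤ k) (hkL : k * L ≤ π / 2)
    (hx : x ∈ Icc x₀ (x₀ + L)) : 0 ≤ cos (k * (x - x₀)) := by
  have hlo : 0 ≤ k * (x - x₀) := mul_nonneg hk (by linarith [hx.1])
  have hhi : k * (x - x₀) ≤ k * L := mul_le_mul_of_nonneg_left (by linarith [hx.2]) hk
  exact cos_nonneg_of_mem_Icc ⟨by linarith [pi_pos], by linarith⟩

theorem stmt_8_general (ζ₀ L : ℝ) (hL : 0 < L) (η η' a : ℝ → ℝ)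
    (hη' : ∀ ζ ∈ Set.Icc ζ₀ (ζ₀ + L),
      HasDerivWithinAt η (η' ζ) (Set.Icc ζ₀ (ζ₀ + L)) ζ)
    (hη'' : ∀ ζ ∈ Set.Icc ζ₀ (ζ₀ + L),
      HasDerivWithinAt η' (-(a ζ * η ζ)) (Set.Icc ζ₀ (ζ₀ + L)) ζ)
    (h0 : η ζ₀ = 1) (h0' : η' ζ₀ = 0)
    (halb : ∀ ζ ∈ Set.Icc ζ₀ (ζ₀ + L), (Real.pi / (2 * L))^2 ≤ a ζ) :
    ∃ ζ ∈ Set.Icc ζ₀ (ζ₀ + L), η ζ = 0 := by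
  set k := π / (2 * L)
  have hk : 0 < k := by positivity
  have hkL : k * L = π / 2 := by simp only [k]; field_simp
  have hleft : ζ₀ ∈ Icc ζ₀ (ζ₀ + L) := ⟨le_rfl, by linarith⟩
  have hright : ζ₀ + L ∈ Icc ζ₀ (ζ₀ + L) := ⟨by linarith, le_rfl⟩
  by_contra! hne
  have hpos := isPreconnected_Icc.pos_of_ne_zero (fun x hx => (hη' x hx).continuousWithinAt)
    hleft (h0 ▸ one_pos) hne
  have hmono := monotoneOn_wronskian_of_le (convex_Icc _ _) hη' hη''
    (fun x _ => (hasDerivAt_cos_mul_sub k ζ₀ x).hasDerivWithinAt)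
    (fun x _ => (hasDerivAt_neg_mul_sin_mul_sub k ζ₀ x).hasDerivWithinAt) halb
    (fun x hx => (hpos x hx).le) fun x hx => cos_mul_sub_nonneg hk.le hkL.le hx
  have hW := hmono hleft hright (by linarith)
  simp only [sub_self, mul_zero, sin_zero, cos_zero, h0, h0', add_sub_cancel_left, hkL,
    sin_pi_div_two, cos_pi_div_two] at hW
  nlinarith [hpos _ hright]

theorem stmt_8 (ζ₀ L : ℝ) (hL : 0 < L) (η η' a : ℝ → ℝ)
    (ha : ContinuousOn a (Set.Icc ζ₀ (ζ₀ + L)))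
    (hη' : ∀ ζ ∈ Set.Icc ζ₀ (ζ₀ + L),
      HasDerivWithinAt η (η' ζ) (Set.Icc ζ₀ (ζ₀ + L)) ζ)
    (hη'' : ∀ ζ ∈ Set.Icc ζ₀ (ζ₀ + L),
      HasDerivWithinAt η' (-(a ζ * η ζ)) (Set.Icc ζ₀ (ζ₀ + L)) ζ)
    (hη'cont : ContinuousOn η' (Set.Icc ζ₀ (ζ₀ + L)))
    (h0 : η ζ₀ = 1) (h0' : η' ζ₀ = 0)
    (halb : ∀ ζ ∈ Set.Icc ζ₀ (ζ₀ + L), (Real.pi / (2 * L))^2 ≤ a ζ) :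
    ∃ ζ ∈ Set.Icc ζ₀ (ζ₀ + L), η ζ = 0 :=
  stmt_8_general ζ₀ L hL η η' a hη' hη'' h0 h0' halb
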